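/- Let s, t, p be nonzero real numbers with s < 0 < t, and suppose p ≥ max(0, (2/3)(s+t)), with the strict inequality p > 0 required in case s = −t. Then for all positive real numbers a ≠ b, s/t < (M_s(a,b)^p − G(a,b)^p)/(M_t(a,b)^p − G(a,b)^p) < 0. -/

import Mathlib

/-- The power mean of order `r` of `a` and `b`. -/
noncomputable def powerMean (r a b : ℝ) : ℝ := ((a ^ r + b ^ r) / 2) ^ (1 / r)

/-- The geometric mean of `a` and `b`. -/
noncomputable def geomMean (a b : ℝ) : ℝ := Real.sqrt (a * b)

/-!
Put `d = (log a - log b) / 2 > 0` (after swapping `a` and `b`). Then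
`M_r(a,b)^p = G(a,b)^p · cosh(r d)^(p/r)`, so both bounds reduce to
`s (cosh(t d)^(p/t) - 1) < t (cosh(s d)^(p/s) - 1)`. Both sides agree at `d = 0`; comparing
derivatives and taking logarithms, it suffices that with `u = -s` and `q x = log (tanh x / x)`,
`q (u x) - q (t x) < (p/u) log cosh (u x) + (p/t) log cosh (t x)`.
For `u ≥ t` this holds because `q` decreases; for `u < t` it follows from
`q y - q z < (2/3) (z - y) (log cosh y / y + log cosh z / z)` for `0 < y < z`,
which is where `p ≥ 2 (s + t) / 3` enters.
-/

open Real Set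

theorem strictMonoOn_of_hasDerivAt_pos {D : Set ℝ} (hD : Convex ℝ D) {f f' : ℝ → ℝ}
    (hf : ∀ x ∈ D, HasDerivAt f (f' x) x) (hf' : ∀ x ∈ interior D, 0 < f' x) :
    StrictMonoOn f D :=
  strictMonoOn_of_deriv_pos hD (fun x hx => (hf x hx).continuousAt.continuousWithinAt)
    fun x hx => (hf x (interior_subset hx)).deriv ▸ hf' x hx

theorem strictAntiOn_of_hasDerivAt_neg {D : Set ℝ} (hD : Convex ℝ D) {f f' : ℝ → ℝ}
    (hf : ∀ x ∈ D, HasDerivAt f (f' x) x) (hf' : ∀ x ∈ interior D, f' x < 0) :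
    StrictAntiOn f D :=
  strictAntiOn_of_deriv_neg hD (fun x hx => (hf x hx).continuousAt.continuousWithinAt)
    fun x hx => (hf x (interior_subset hx)).deriv ▸ hf' x hx

theorem hasDerivAt_log_cosh (x : ℝ) : HasDerivAt (fun x => log (cosh x)) (tanh x) x :=
  tanh_eq_sinh_div_cosh x ▸ (hasDerivAt_cosh x).log (cosh_pos x).ne'

theorem sinh_lt_mul_cosh {x : ℝ} (hx : 0 < x) : sinh x < x * cosh x := by
  have hmono : StrictMonoOn (fun x => x * cosh x - sinh x) (Ici 0) := by
    refine strictMonoOn_of_hasDerivAt_pos (convex_Ici 0) (f' := fun y => y * sinh y)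
      (fun y _ => ?_) fun y hy => ?_
    · exact (((hasDerivAt_id' y).mul (hasDerivAt_cosh y)).sub (hasDerivAt_sinh y)).congr_deriv
        (by ring)
    · rw [interior_Ici, mem_Ioi] at hy
      exact mul_pos hy (sinh_pos_iff.2 hy)
  simpa using hmono self_mem_Ici hx.le hx

theorem lt_sinh_mul_cosh {x : ℝ} (hx : 0 < x) : x < sinh x * cosh x := by
  have := self_lt_sinh_iff.2 (mul_pos two_pos hx)
  rw [sinh_two_mul] at this
  linarith

theorem one_div_lt_two_div_three_mul_tanh_add {x : ℝ} (hx : 0 < x) :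
    1 / x < 2 / 3 * tanh x + 1 / (sinh x * cosh x) := by
  have hmono : StrictMonoOn (fun x => 2 * x * cosh x ^ 2 + x - 3 * sinh x * cosh x) (Ici 0) := by
    refine strictMonoOn_of_hasDerivAt_pos (convex_Ici 0)
      (f' := fun y => 4 * sinh y * (y * cosh y - sinh y)) (fun y _ => ?_) fun y hy => ?_
    · refine (((((hasDerivAt_id' y).const_mul 2).mul ((hasDerivAt_cosh y).fun_pow 2)).add
        (hasDerivAt_id' y)).sub
        (((hasDerivAt_sinh y).const_mul 3).mul (hasDerivAt_cosh y))).congr_deriv ?_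
      push_cast
      linear_combination (-1 : ℝ) * cosh_sq y
    · rw [interior_Ici, mem_Ioi] at hy
      exact mul_pos (mul_pos four_pos (sinh_pos_iff.2 hy)) (sub_pos.2 (sinh_lt_mul_cosh hy))
  have h : 0 < 2 * x * cosh x ^ 2 + x - 3 * sinh x * cosh x := by
    simpa using hmono self_mem_Ici hx.le hx
  have hS := sinh_pos_iff.2 hx
  have hC := cosh_pos x
  rw [tanh_eq_sinh_div_cosh, ← sub_pos]
  have hid : 2 / 3 * (sinh x / cosh x) + 1 / (sinh x * cosh x) - 1 / x =
      (2 * x * cosh x ^ 2 + x - 3 * sinh x * cosh x) / (3 * x * sinh x * cosh x) := by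
    field_simp
    linear_combination (-2 * x) * cosh_sq x
  rw [hid]
  exact div_pos h (by positivity)

theorem mul_tanh_lt_two_mul_log_cosh {x : ℝ} (hx : 0 < x) : x * tanh x < 2 * log (cosh x) := by
  simp only [tanh_eq_sinh_div_cosh]
  have hmono : StrictMonoOn (fun x => 2 * log (cosh x) - x * (sinh x / cosh x)) (Ici 0) := by
    refine strictMonoOn_of_hasDerivAt_pos (convex_Ici 0)
      (f' := fun y => (sinh y * cosh y - y) / cosh y ^ 2) (fun y _ => ?_) fun y hy => ?_
    · refine (((hasDerivAt_log_cosh y).const_mul 2).sub ((hasDerivAt_id' y).mul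
        ((hasDerivAt_sinh y).fun_div (hasDerivAt_cosh y) (cosh_pos y).ne'))).congr_deriv ?_
      rw [tanh_eq_sinh_div_cosh]
      field_simp
      linear_combination (-y) * cosh_sq y
    · rw [interior_Ici, mem_Ioi] at hy
      exact div_pos (sub_pos.2 (lt_sinh_mul_cosh hy)) (by positivity)
  simpa using hmono self_mem_Ici hx.le hx

theorem strictAntiOn_log_cosh_div_sq : StrictAntiOn (fun x => log (cosh x) / x ^ 2) (Ioi 0) := by
  refine strictAntiOn_of_hasDerivAt_neg (convex_Ioi 0)
    (f' := fun x => (x * tanh x - 2 * log (cosh x)) / x ^ 3) (fun x hx => ?_)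
    fun x hx => ?_
  · rw [mem_Ioi] at hx
    refine ((hasDerivAt_log_cosh x).div (hasDerivAt_pow 2 x) (by positivity)).congr_deriv ?_
    field_simp
    ring
  · rw [interior_Ioi, mem_Ioi] at hx
    exact div_neg_of_neg_of_pos (sub_neg.2 (mul_tanh_lt_two_mul_log_cosh hx))
      (by positivity)

noncomputable def logTanhDivSelf (x : ℝ) : ℝ := log (sinh x) - log (cosh x) - log x

theorem hasDerivAt_logTanhDivSelf {x : ℝ} (hx : 0 < x) :
    HasDerivAt logTanhDivSelf (1 / (sinh x * cosh x) - 1 / x) x := by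
  have hS := sinh_pos_iff.2 hx
  refine ((((hasDerivAt_sinh x).log hS.ne').sub (hasDerivAt_log_cosh x)).sub
    (hasDerivAt_log hx.ne')).congr_deriv ?_
  rw [tanh_eq_sinh_div_cosh]
  field_simp
  linear_combination x * cosh_sq x

theorem strictAntiOn_logTanhDivSelf : StrictAntiOn logTanhDivSelf (Ioi 0) :=
  strictAntiOn_of_hasDerivAt_neg (convex_Ioi 0) (fun _ hx => hasDerivAt_logTanhDivSelf hx)
    fun x hx => by
      rw [interior_Ioi, mem_Ioi] at hx
      exact sub_neg.2 (one_div_lt_one_div_of_lt hx (lt_sinh_mul_cosh hx))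

theorem logTanhDivSelf_sub_lt {y z : ℝ} (hy : 0 < y) (hyz : y < z) :
    logTanhDivSelf y - logTanhDivSelf z <
      2 / 3 * ((z - y) * (log (cosh y) / y + log (cosh z) / z)) := by
  set Ly := log (cosh y)
  let F x := 2 / 3 * ((x - y) * (Ly / y + log (cosh x) / x)) + logTanhDivSelf x
  have hF : ∀ x ∈ Ici y, HasDerivAt F (2 / 3 * (Ly / y + log (cosh x) / x +
      (x - y) * ((tanh x * x - log (cosh x)) / x ^ 2)) + (1 / (sinh x * cosh x) - 1 / x)) x := by
    intro x hx
    have hx0 : 0 < x := hy.trans_le hx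
    refine ((((hasDerivAt_id' x).sub_const y).mul (((hasDerivAt_log_cosh x).fun_div
      (hasDerivAt_id' x) hx0.ne').const_add _)).const_mul _ |>.add
      (hasDerivAt_logTanhDivSelf hx0)).congr_deriv ?_
    ring
  have hmono : StrictMonoOn F (Ici y) := by
    refine strictMonoOn_of_hasDerivAt_pos (convex_Ici y) hF fun x hx => ?_
    rw [interior_Ici, mem_Ioi] at hx
    have hx0 : 0 < x := hy.trans hx
    set Lx := log (cosh x)
    have hdecr : Lx / x ^ 2 < Ly / y ^ 2 := strictAntiOn_log_cosh_div_sq hy hx0 hx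
    have htanh : x * tanh x < 2 * Lx := mul_tanh_lt_two_mul_log_cosh hx0
    -- with `φ x = log (cosh x) / x` the bracket is `φ y + φ x + (x - y) φ' x`,
    -- while `φ x + x φ' x = tanh x`
    have hbracket : tanh x < Ly / y + Lx / x + (x - y) * ((tanh x * x - Lx) / x ^ 2) := by
      have hsplit : Ly / y + Lx / x + (x - y) * ((tanh x * x - Lx) / x ^ 2) - tanh x =
          y * (Ly / y ^ 2 - Lx / x ^ 2) + y * (2 * Lx - x * tanh x) / x ^ 2 := by
        field_simp
        ring
      have := sub_pos.2 hdecr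
      have := sub_pos.2 htanh
      have : 0 < y * (Ly / y ^ 2 - Lx / x ^ 2) + y * (2 * Lx - x * tanh x) / x ^ 2 := by
        positivity
      linarith
    linarith [one_div_lt_two_div_three_mul_tanh_add hx0]
  have := hmono self_mem_Ici hyz.le hyz
  simp only [F, sub_self, zero_mul, mul_zero, zero_add] at this
  linarith

theorem logTanhDivSelf_mul_sub_lt {u t p x : ℝ} (hu : 0 < u) (ht : 0 < t) (hx : 0 < x)
    (hp : 0 < p) (hpge : 2 / 3 * (t - u) ≤ p) :
    logTanhDivSelf (u * x) - logTanhDivSelf (t * x) <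
      p / u * log (cosh (u * x)) + p / t * log (cosh (t * x)) := by
  have hLu : 0 < log (cosh (u * x)) := log_pos (one_lt_cosh.2 (mul_pos hu hx).ne')
  have hLt : 0 < log (cosh (t * x)) := log_pos (one_lt_cosh.2 (mul_pos ht hx).ne')
  rcases le_or_gt (t * x) (u * x) with hle | hlt
  · have := strictAntiOn_logTanhDivSelf.antitoneOn (mem_Ioi.2 (mul_pos ht hx))
      (mem_Ioi.2 (mul_pos hu hx)) hle
    have : 0 < p / u * log (cosh (u * x)) + p / t * log (cosh (t * x)) := by positivity
    linarith
  · calc logTanhDivSelf (u * x) - logTanhDivSelf (t * x)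
        < 2 / 3 * ((t * x - u * x) * (log (cosh (u * x)) / (u * x) +
            log (cosh (t * x)) / (t * x))) := logTanhDivSelf_sub_lt (mul_pos hu hx) hlt
      _ = 2 / 3 * (t - u) * (log (cosh (u * x)) / u + log (cosh (t * x)) / t) := by
        field_simp
      _ ≤ p * (log (cosh (u * x)) / u + log (cosh (t * x)) / t) := by gcongr
      _ = p / u * log (cosh (u * x)) + p / t * log (cosh (t * x)) := by ring

theorem hasDerivAt_cosh_mul_rpow (r e c : ℝ) :
    HasDerivAt (fun c => cosh (r * c) ^ e) (sinh (r * c) * r * e * cosh (r * c) ^ (e - 1)) c :=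
  (((hasDerivAt_cosh (r * c)).comp c ((hasDerivAt_id' c).const_mul r)).rpow_const
    (Or.inl (cosh_pos _).ne')).congr_deriv (by rw [Function.comp_apply]; ring)

theorem mul_sinh_mul_cosh_rpow_lt {u t p x : ℝ} (hu : 0 < u) (ht : 0 < t) (hx : 0 < x)
    (hp : 0 < p) (hpge : 2 / 3 * (t - u) ≤ p) :
    t * sinh (u * x) * cosh (u * x) ^ (-(p / u) - 1) <
      u * sinh (t * x) * cosh (t * x) ^ (p / t - 1) := by
  have hSu := sinh_pos_iff.2 (mul_pos hu hx)
  have hSt := sinh_pos_iff.2 (mul_pos ht hx)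
  have hCu := cosh_pos (u * x)
  have hCt := cosh_pos (t * x)
  have h := logTanhDivSelf_mul_sub_lt hu ht hx hp hpge
  rw [logTanhDivSelf, logTanhDivSelf, log_mul hu.ne' hx.ne', log_mul ht.ne' hx.ne'] at h
  rw [← log_lt_log_iff (by positivity) (by positivity), log_mul (by positivity) (by positivity),
    log_mul (by positivity) (by positivity), log_rpow hCu, log_mul (by positivity) (by positivity),
    log_mul (by positivity) (by positivity), log_rpow hCt]
  linear_combination h

theorem mul_cosh_rpow_sub_one_lt {s t p c : ℝ} (hs : s < 0) (ht : 0 < t) (hp : 0 < p)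
    (hpge : 2 / 3 * (s + t) ≤ p) (hc : 0 < c) :
    s * (cosh (t * c) ^ (p / t) - 1) < t * (cosh (s * c) ^ (p / s) - 1) := by
  obtain ⟨u, hu, rfl⟩ : ∃ u, 0 < u ∧ s = -u := ⟨-s, neg_pos.2 hs, (neg_neg s).symm⟩
  rw [neg_mul u c, cosh_neg, div_neg]
  let Θ x := u * (cosh (t * x) ^ (p / t) - 1) + t * (cosh (u * x) ^ (-(p / u)) - 1)
  have hΘ : StrictMonoOn Θ (Ici 0) := by
    refine strictMonoOn_of_hasDerivAt_pos (convex_Ici 0)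
      (fun x _ => (((hasDerivAt_cosh_mul_rpow t _ x).sub_const 1).const_mul u).add
        (((hasDerivAt_cosh_mul_rpow u _ x).sub_const 1).const_mul t)) fun x hx => ?_
    rw [interior_Ici, mem_Ioi] at hx
    have h := mul_sinh_mul_cosh_rpow_lt hu ht hx hp (by linarith)
    have hid : u * (sinh (t * x) * t * (p / t) * cosh (t * x) ^ (p / t - 1)) +
        t * (sinh (u * x) * u * -(p / u) * cosh (u * x) ^ (-(p / u) - 1)) =
        p * (u * sinh (t * x) * cosh (t * x) ^ (p / t - 1) -
          t * sinh (u * x) * cosh (u * x) ^ (-(p / u) - 1)) := by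
      field_simp
      ring
    rw [hid]
    exact mul_pos hp (sub_pos.2 h)
  have := hΘ self_mem_Ici hc.le hc
  simp only [Θ, mul_zero, cosh_zero, one_rpow, sub_self, add_zero] at this
  linarith

theorem powerMean_comm (r a b : ℝ) : powerMean r a b = powerMean r b a := by
  rw [powerMean, powerMean, add_comm]

theorem geomMean_comm (a b : ℝ) : geomMean a b = geomMean b a := by
  rw [geomMean, geomMean, mul_comm]

theorem powerMean_eq_geomMean_mul_cosh_rpow {r a b : ℝ} (hr : r ≠ 0) (ha : 0 < a) (hb : 0 < b) :
    powerMean r a b = geomMean a b * cosh (r * ((log a - log b) / 2)) ^ (1 / r) := by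
  have hG : geomMean a b = exp ((log a + log b) / 2) := by
    rw [geomMean, sqrt_eq_rpow, ← exp_log (mul_pos ha hb), ← exp_mul, log_mul ha.ne' hb.ne',
      div_eq_mul_one_div]
    congr 1
    ring
  have hmean : (a ^ r + b ^ r) / 2 =
      exp (r * ((log a + log b) / 2)) * cosh (r * ((log a - log b) / 2)) := by
    rw [rpow_def_of_pos ha, rpow_def_of_pos hb, cosh_eq, mul_div_assoc', mul_add, ← exp_add,
      ← exp_add]
    ring_nf
  rw [powerMean, hmean, mul_rpow (exp_pos _).le (cosh_pos _).le, ← exp_mul, hG]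
  field_simp

theorem powerMean_rpow_eq {r a b : ℝ} (p : ℝ) (hr : r ≠ 0) (ha : 0 < a) (hb : 0 < b) :
    powerMean r a b ^ p = geomMean a b ^ p * cosh (r * ((log a - log b) / 2)) ^ (p / r) := by
  have hG : 0 ≤ geomMean a b := sqrt_nonneg _
  rw [powerMean_eq_geomMean_mul_cosh_rpow hr ha hb, mul_rpow hG (by positivity),
    ← rpow_mul (cosh_pos _).le, one_div_mul_eq_div]

theorem ratio_bounds_mixed_large_p_general (s t p : ℝ) (hp : p ≠ 0)
    (hs0 : s < 0) (h0t : 0 < t)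
    (hpge : max 0 (2 / 3 * (s + t)) ≤ p) :
    ∀ a b : ℝ, 0 < a → 0 < b → a ≠ b →
      s / t <
        (powerMean s a b ^ p - geomMean a b ^ p) /
          (powerMean t a b ^ p - geomMean a b ^ p) ∧
      (powerMean s a b ^ p - geomMean a b ^ p) /
          (powerMean t a b ^ p - geomMean a b ^ p) < 0 := by
  intro a b ha hb hab
  wlog hba : b < a generalizing a b
  · simpa only [powerMean_comm, geomMean_comm] using
      this b a hb ha hab.symm (lt_of_le_of_ne (not_lt.1 hba) hab)
  have hp0 : 0 < p := lt_of_le_of_ne (le_of_max_le_left hpge) hp.symm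
  have hg : 0 < geomMean a b ^ p := rpow_pos_of_pos (sqrt_pos.2 (mul_pos ha hb)) p
  rw [powerMean_rpow_eq p hs0.ne ha hb, powerMean_rpow_eq p h0t.ne' ha hb, ← mul_sub_one,
    ← mul_sub_one, mul_div_mul_left _ _ hg.ne']
  set d := (log a - log b) / 2
  have hd : 0 < d := half_pos (sub_pos.2 (log_lt_log hb hba))
  have hX : cosh (s * d) ^ (p / s) < 1 :=
    rpow_lt_one_of_one_lt_of_neg (one_lt_cosh.2 (mul_neg_of_neg_of_pos hs0 hd).ne)
      (div_neg_of_pos_of_neg hp0 hs0)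
  have hY : 1 < cosh (t * d) ^ (p / t) :=
    one_lt_rpow (one_lt_cosh.2 (mul_pos h0t hd).ne') (div_pos hp0 h0t)
  have hkey := mul_cosh_rpow_sub_one_lt hs0 h0t hp0 (le_of_max_le_right hpge) hd
  constructor
  · rw [div_lt_div_iff₀ h0t (sub_pos.2 hY)]
    linarith
  · exact div_neg_of_neg_of_pos (sub_neg.2 hX) (sub_pos.2 hY)

/-- Theorem 3.1(c), first part. -/
theorem ratio_bounds_mixed_large_p (s t p : ℝ) (hs : s ≠ 0) (ht : t ≠ 0) (hp : p ≠ 0)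
    (hs0 : s < 0) (h0t : 0 < t)
    (hpge : max 0 (2 / 3 * (s + t)) ≤ p)
    (hexc : s = -t → 0 < p) :
    ∀ a b : ℝ, 0 < a → 0 < b → a ≠ b →
      s / t <
        (powerMean s a b ^ p - geomMean a b ^ p) /
          (powerMean t a b ^ p - geomMean a b ^ p) ∧
      (powerMean s a b ^ p - geomMean a b ^ p) /
          (powerMean t a b ^ p - geomMean a b ^ p) < 0 :=
  ratio_bounds_mixed_large_p_general s t p hp hs0 h0t hpge
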